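/- arXiv:2505.22055 — 6 statements merged into one kernel-verified Lean document; each statement's English description precedes it below -/
import Mathlib

section
/- Let q be a prime power, m < n positive integers, and x_1, ..., x_m elements of F_{q^n}. The Moore determinant det(M), where M is the m×m matrix with entries M_{i,j} = x_j^{q^{i-1}}, equals 0 if and only if x_1, ..., x_m are linearly dependent over F_q. -/
/-!
With `q = #K`, the map `a ↦ a ^ q ^ i` is `K`-linear on `F` (a power of the Frobenius).
A column relation of the Moore matrix is therefore the `K`-linear relation itself raised to the
`q ^ i`-th powers. A row relation `v` gives a `q`-polynomial `∑ v i X ^ q ^ i` which is `K`-linear,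
so it vanishes on the whole span of the `x j`; if these were independent this span would have
`q ^ m` elements, more than the degree `q ^ (m - 1)` of the nonzero polynomial allows.
-/

open Polynomial Finset

section QPolynomial

variable {F : Type*} [Field F] {q m : ℕ}

noncomputable def qPolynomial (q : ℕ) (v : Fin m → F) : F[X] :=
  ∑ i, C (v i) * X ^ q ^ (i : ℕ)

theorem eval_qPolynomial (v : Fin m → F) (a : F) :
    (qPolynomial q v).eval a = ∑ i, v i * a ^ q ^ (i : ℕ) := by
  simp [qPolynomial, eval_finsetSum]

theorem coeff_qPolynomial_pow (hq : 2 ≤ q) (v : Fin m → F) (i : Fin m) :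
    (qPolynomial q v).coeff (q ^ (i : ℕ)) = v i := by
  simp [qPolynomial, (Nat.pow_right_injective hq).eq_iff, Fin.val_inj]

theorem qPolynomial_ne_zero (hq : 2 ≤ q) {v : Fin m → F} (hv : v ≠ 0) : qPolynomial q v ≠ 0 := by
  obtain ⟨i, hi⟩ := Function.ne_iff.mp hv
  intro h
  exact hi (by simpa [h] using (coeff_qPolynomial_pow hq v i).symm)

theorem natDegree_qPolynomial_le (hq : 0 < q) (v : Fin m → F) :
    (qPolynomial q v).natDegree ≤ q ^ (m - 1) :=
  natDegree_sum_le_of_forall_le _ _ fun i _ =>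
    (natDegree_C_mul_X_pow_le _ _).trans (Nat.pow_le_pow_right hq (by omega))

theorem card_le_of_forall_qPolynomial_eq_zero (hq : 2 ≤ q) {v : Fin m → F} (hv : v ≠ 0)
    (Z : Finset F) (hZ : ∀ a ∈ Z, ∑ i, v i * a ^ q ^ (i : ℕ) = 0) : #Z ≤ q ^ (m - 1) := by
  refine (card_le_degree_of_subset_roots fun a ha => ?_).trans
    (natDegree_qPolynomial_le (by omega) v)
  rw [mem_roots (qPolynomial_ne_zero hq hv), IsRoot, eval_qPolynomial]
  exact hZ a ha

end QPolynomial

section Moore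

variable {K F : Type*} [Field K] [Fintype K] [Field F] [Algebra K F] {m : ℕ}

noncomputable def mooreMatrix (q : ℕ) (x : Fin m → F) : Matrix (Fin m) (Fin m) F :=
  Matrix.of fun i j => x j ^ q ^ (i : ℕ)

theorem sum_smul_pow_card_pow {ι : Type*} (s : Finset ι) (c : ι → K) (x : ι → F) (i : ℕ) :
    (∑ j ∈ s, c j • x j) ^ Fintype.card K ^ i = ∑ j ∈ s, c j • x j ^ Fintype.card K ^ i := by
  have h : ∀ a : F, (FiniteField.frobeniusAlgHom K F ^ i) a = a ^ Fintype.card K ^ i := fun a => by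
    rw [AlgHom.coe_pow, FiniteField.coe_frobeniusAlgHom, pow_iterate]
  simp only [← h, map_sum, map_smul]

theorem sum_mul_sum_smul_pow_card_pow {ι : Type*} [Fintype ι] (v : Fin m → F) (c : ι → K)
    (x : ι → F) :
    ∑ i, v i * (∑ j, c j • x j) ^ Fintype.card K ^ (i : ℕ) =
      ∑ j, c j • ∑ i, v i * x j ^ Fintype.card K ^ (i : ℕ) := by
  simp only [sum_smul_pow_card_pow, mul_sum, mul_smul_comm, smul_sum]
  exact sum_comm

theorem det_mooreMatrix_ne_zero (x : Fin m → F) (hx : LinearIndependent K x) :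
    (mooreMatrix (Fintype.card K) x).det ≠ 0 := by
  classical
  intro hdet
  obtain ⟨v, hv, hvM⟩ := Matrix.exists_vecMul_eq_zero_iff.mpr hdet
  obtain ⟨i₀, -⟩ := Function.ne_iff.mp hv
  have hq : 2 ≤ Fintype.card K := Fintype.one_lt_card
  have hroots : ∀ a ∈ univ.image (Fintype.linearCombination K x),
      ∑ i, v i * a ^ Fintype.card K ^ (i : ℕ) = 0 := by
    intro a ha
    obtain ⟨c, -, rfl⟩ := mem_image.mp ha
    have hcol : ∀ j, ∑ i, v i * x j ^ Fintype.card K ^ (i : ℕ) = 0 := fun j => by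
      simpa [Matrix.vecMul, dotProduct, mooreMatrix] using congrFun hvM j
    simp [Fintype.linearCombination_apply, sum_mul_sum_smul_pow_card_pow, hcol]
  have hcard := card_le_of_forall_qPolynomial_eq_zero hq hv _ hroots
  rw [card_image_of_injective _ hx.fintypeLinearCombination_injective, card_univ,
    Fintype.card_fun, Fintype.card_fin] at hcard
  exact hcard.not_gt (Nat.pow_lt_pow_right hq (Nat.sub_lt i₀.pos one_pos))

theorem det_mooreMatrix_eq_zero (x : Fin m → F) (hx : ¬ LinearIndependent K x) :
    (mooreMatrix (Fintype.card K) x).det = 0 := by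
  obtain ⟨c, hc, j, hj⟩ := Fintype.not_linearIndependent_iff.mp hx
  refine Matrix.exists_mulVec_eq_zero_iff.mp ⟨algebraMap K F ∘ c, ?_, funext fun i => ?_⟩
  · exact fun h => hj (by simpa using congrFun h j)
  · simp only [Matrix.mulVec, dotProduct, mooreMatrix, Matrix.of_apply, Function.comp_apply,
      Pi.zero_apply, mul_comm _ (algebraMap K F _), ← Algebra.smul_def]
    rw [← sum_smul_pow_card_pow, hc, zero_pow (by positivity)]

theorem det_mooreMatrix_eq_zero_iff (x : Fin m → F) :
    (mooreMatrix (Fintype.card K) x).det = 0 ↔ ¬ LinearIndependent K x :=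
  ⟨fun hdet hx => det_mooreMatrix_ne_zero x hx hdet, det_mooreMatrix_eq_zero x⟩

end Moore

theorem moore_det_eq_zero_iff_general (q m : ℕ)
    (K F : Type) [Field K] [Field F] [Algebra K F] [Fintype K]
    (hK : Fintype.card K = q)
    (x : Fin m → F) :
    Matrix.det (Matrix.of fun i j : Fin m => x j ^ q ^ (i : ℕ)) = 0 ↔
      ¬ LinearIndependent K x := by
  subst hK
  exact det_mooreMatrix_eq_zero_iff x

/-- The Moore determinant of `x_1, ..., x_m ∈ F_{q^n}` vanishes iff the `x_i` are
linearly dependent over the subfield `F_q`. -/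
theorem moore_det_eq_zero_iff (q n m : ℕ) (hq : IsPrimePow q) (hm : 0 < m) (hmn : m < n)
    (K F : Type) [Field K] [Field F] [Algebra K F] [Fintype K] [Fintype F]
    (hK : Fintype.card K = q) (hF : Fintype.card F = q ^ n)
    (x : Fin m → F) :
    Matrix.det (Matrix.of fun i j : Fin m => x j ^ q ^ (i : ℕ)) = 0 ↔
      ¬ LinearIndependent K x :=
  moore_det_eq_zero_iff_general q m K F hK x
end

section
/- Let q = 2^e, k ≥ 1, and V = F_{q^{2k+1}} × F_q. Define g((x,x_1),(y,y_1)) = (x_1 y + y_1 x)^{q+1} + x y^q + x^q y ∈ F_{q^{2k+1}}. If z̄ = a_1 x̄ + a_2 ȳ and w̄ = b_1 x̄ + b_2 ȳ with a_1,a_2,b_1,b_2 ∈ F_q, then g(z̄, w̄) = α^2 (x_1 y + y_1 x)^{q+1} + α (x y^q + x^q y) where α = a_1 b_2 + a_2 b_1. -/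
/-!
In characteristic 2 the terms `a₁b₁x₁x` and `a₂b₂y₁y` of the cross term cancel in pairs, leaving
`(a₁b₂ + a₂b₁)(x₁y + y₁x)`. The scalars lie in `F_q`, so they commute with the `q`-th power map,
which is additive; the same cancellation then turns `zw^q + z^qw` into `α(xy^q + x^qy)`, and
`α^{q+1} = α²`.
-/

/-- The bivariate function `g((x,x₁),(y,y₁)) = (x₁y + y₁x)^{q+1} + xy^q + x^q y`
on `V = F_{q^{2k+1}} × F_q`. -/
def gfun (K F : Type) [Field K] [Field F] [Algebra K F] (q : ℕ) (xb yb : F × K) : F :=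
  (algebraMap K F xb.2 * yb.1 + algebraMap K F yb.2 * xb.1) ^ (q + 1) +
    xb.1 * yb.1 ^ q + xb.1 ^ q * yb.1

section CharTwo

variable {R : Type*} [CommRing R] [CharP R 2]

theorem cross_term_on_span (x y x₁ y₁ a₁ a₂ b₁ b₂ : R) :
    (a₁ * x₁ + a₂ * y₁) * (b₁ * x + b₂ * y) + (b₁ * x₁ + b₂ * y₁) * (a₁ * x + a₂ * y) =
      (a₁ * b₂ + a₂ * b₁) * (x₁ * y + y₁ * x) := by
  linear_combination (a₁ * b₁ * x₁ * x + a₂ * b₂ * y₁ * y) * CharTwo.two_eq_zero (R := R)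

theorem frobenius_pow_on_span (e : ℕ) (x y a₁ a₂ : R) (ha₁ : a₁ ^ 2 ^ e = a₁)
    (ha₂ : a₂ ^ 2 ^ e = a₂) :
    (a₁ * x + a₂ * y) ^ 2 ^ e = a₁ * x ^ 2 ^ e + a₂ * y ^ 2 ^ e := by
  rw [add_pow_char_pow, mul_pow, mul_pow, ha₁, ha₂]

theorem frobenius_term_on_span (e : ℕ) (x y a₁ a₂ b₁ b₂ : R) (ha₁ : a₁ ^ 2 ^ e = a₁)
    (ha₂ : a₂ ^ 2 ^ e = a₂) (hb₁ : b₁ ^ 2 ^ e = b₁) (hb₂ : b₂ ^ 2 ^ e = b₂) :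
    (a₁ * x + a₂ * y) * (b₁ * x + b₂ * y) ^ 2 ^ e + (a₁ * x + a₂ * y) ^ 2 ^ e * (b₁ * x + b₂ * y) =
      (a₁ * b₂ + a₂ * b₁) * (x * y ^ 2 ^ e + x ^ 2 ^ e * y) := by
  rw [frobenius_pow_on_span e x y a₁ a₂ ha₁ ha₂, frobenius_pow_on_span e x y b₁ b₂ hb₁ hb₂]
  linear_combination (a₁ * b₁ * x * x ^ 2 ^ e + a₂ * b₂ * y * y ^ 2 ^ e) *
    CharTwo.two_eq_zero (R := R)

end CharTwo

theorem gfun_on_span_of_pow_algebraMap {K F : Type} [Field K] [Field F] [Algebra K F]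
    [CharP F 2] (e : ℕ) (hfix : ∀ c : K, algebraMap K F c ^ 2 ^ e = algebraMap K F c)
    (x y : F) (x₁ y₁ a₁ a₂ b₁ b₂ : K) :
    gfun K F (2 ^ e)
        (algebraMap K F a₁ * x + algebraMap K F a₂ * y, a₁ * x₁ + a₂ * y₁)
        (algebraMap K F b₁ * x + algebraMap K F b₂ * y, b₁ * x₁ + b₂ * y₁) =
      algebraMap K F ((a₁ * b₂ + a₂ * b₁) ^ 2) *
          (algebraMap K F x₁ * y + algebraMap K F y₁ * x) ^ (2 ^ e + 1) +
        algebraMap K F (a₁ * b₂ + a₂ * b₁) * (x * y ^ (2 ^ e) + x ^ (2 ^ e) * y) := by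
  set α := a₁ * b₂ + a₂ * b₁
  have hα : algebraMap K F α ^ (2 ^ e + 1) = algebraMap K F (α ^ 2) := by
    rw [pow_succ, hfix, map_pow, sq]
  have hcross := cross_term_on_span x y (algebraMap K F x₁) (algebraMap K F y₁)
    (algebraMap K F a₁) (algebraMap K F a₂) (algebraMap K F b₁) (algebraMap K F b₂)
  have hfrob := frobenius_term_on_span e x y (algebraMap K F a₁) (algebraMap K F a₂)
    (algebraMap K F b₁) (algebraMap K F b₂) (hfix a₁) (hfix a₂) (hfix b₁) (hfix b₂)
  simp only [← map_mul, ← map_add] at hcross hfrob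
  rw [gfun, add_assoc, hcross, hfrob, mul_pow, hα]

theorem gfun_on_span_general (e : ℕ)
    (K F : Type) [Field K] [Field F] [Algebra K F] [Fintype K]
    (hK : Fintype.card K = 2 ^ e)
    (x y : F) (x₁ y₁ a₁ a₂ b₁ b₂ : K) :
    gfun K F (2 ^ e)
        (algebraMap K F a₁ * x + algebraMap K F a₂ * y, a₁ * x₁ + a₂ * y₁)
        (algebraMap K F b₁ * x + algebraMap K F b₂ * y, b₁ * x₁ + b₂ * y₁) =
      algebraMap K F ((a₁ * b₂ + a₂ * b₁) ^ 2) *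
          (algebraMap K F x₁ * y + algebraMap K F y₁ * x) ^ (2 ^ e + 1) +
        algebraMap K F (a₁ * b₂ + a₂ * b₁) * (x * y ^ (2 ^ e) + x ^ (2 ^ e) * y) := by
  have : CharP K 2 := charP_of_card_eq_prime_pow hK
  have : CharP F 2 := charP_of_injective_algebraMap' K 2
  refine gfun_on_span_of_pow_algebraMap e (fun c => ?_) x y x₁ y₁ a₁ a₂ b₁ b₂
  rw [← map_pow, ← hK, FiniteField.pow_card]

/-- For `z̄ = a₁x̄ + a₂ȳ` and `w̄ = b₁x̄ + b₂ȳ`, one has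
`g(z̄,w̄) = α²(x₁y+y₁x)^{q+1} + α(xy^q + x^q y)` with `α = a₁b₂ + a₂b₁`. -/
theorem gfun_on_span (e k : ℕ) (he : 1 ≤ e) (hk : 1 ≤ k)
    (K F : Type) [Field K] [Field F] [Algebra K F] [Fintype K] [Fintype F]
    (hK : Fintype.card K = 2 ^ e) (hF : Fintype.card F = (2 ^ e) ^ (2 * k + 1))
    (x y : F) (x₁ y₁ a₁ a₂ b₁ b₂ : K) :
    gfun K F (2 ^ e)
        (algebraMap K F a₁ * x + algebraMap K F a₂ * y, a₁ * x₁ + a₂ * y₁)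
        (algebraMap K F b₁ * x + algebraMap K F b₂ * y, b₁ * x₁ + b₂ * y₁) =
      algebraMap K F ((a₁ * b₂ + a₂ * b₁) ^ 2) *
          (algebraMap K F x₁ * y + algebraMap K F y₁ * x) ^ (2 ^ e + 1) +
        algebraMap K F (a₁ * b₂ + a₂ * b₁) * (x * y ^ (2 ^ e) + x ^ (2 ^ e) * y) :=
  gfun_on_span_general e K F hK x y x₁ y₁ a₁ a₂ b₁ b₂
end

section
/- Let q = 2^e, k ≥ 1, c ∈ F_q^*, and w ∈ F_{q^{2k+1}}. The only solution z ∈ F_{q^{2k+1}} of the equation c·z^{q+1} = w z^q + w^q z is z = 0. -/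
/-!
Put `q = 2^e` and `u = w / z`. Dividing the equation by `z^{q+1}` gives `u^q + u = c`, which in
characteristic two is the Artin–Schreier relation `u^q - u = c`. Since `c^q = c`, applying the
`q`-power Frobenius `n` times gives `u^{q^n} - u = n c`. For `n = 2k + 1` the left side vanishes
because `q^n = |F|`, while `n c = c` as `n` is odd; so `c = 0`.
-/

theorem pow_expChar_pow_pow_sub_self {R : Type*} [CommRing R] {p : ℕ} [ExpChar R p] {e : ℕ}
    {u c : R} (hc : c ^ p ^ e = c) (hu : u ^ p ^ e - u = c) (n : ℕ) :
    u ^ (p ^ e) ^ n - u = n * c := by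
  induction n with
  | zero => simp
  | succ n ih =>
    have hnc : ((n : R) * c) ^ p ^ e = n * c := by
      rw [mul_pow, ← iterateFrobenius_def, map_natCast, hc]
    rw [pow_succ, pow_mul, eq_add_of_sub_eq ih, add_pow_expChar_pow, hnc]
    push_cast
    linear_combination hu

theorem natCast_mul_eq_zero_of_pow_sub_self {F : Type*} [Field F] [Fintype F] {p : ℕ} [ExpChar F p]
    {e m : ℕ} {u c : F} (hF : Fintype.card F = (p ^ e) ^ m) (hc : c ^ p ^ e = c)
    (hu : u ^ p ^ e - u = c) : (m : F) * c = 0 := by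
  rw [← pow_expChar_pow_pow_sub_self hc hu, ← hF, FiniteField.pow_card, sub_self]

theorem div_pow_add_div_eq {F : Type*} [Field F] {q : ℕ} {c w z : F} (hz : z ≠ 0)
    (h : c * z ^ (q + 1) = w * z ^ q + w ^ q * z) : (w / z) ^ q + w / z = c := by
  rw [← div_mul_cancel₀ w hz, mul_pow] at h
  refine mul_left_cancel₀ (pow_ne_zero (q + 1) hz) ?_
  linear_combination -h

theorem only_zero_solution_scaled_general (e k : ℕ)
    (K F : Type) [Field K] [Field F] [Algebra K F] [Fintype K] [Fintype F]
    (hK : Fintype.card K = 2 ^ e) (hF : Fintype.card F = (2 ^ e) ^ (2 * k + 1))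
    (c : K) (hc : c ≠ 0) (w z : F)
    (h : algebraMap K F c * z ^ (2 ^ e + 1) = w * z ^ (2 ^ e) + w ^ (2 ^ e) * z) :
    z = 0 := by
  by_contra hz
  have : CharP K 2 := charP_of_card_eq_prime_pow hK
  have : CharP F 2 := (Algebra.charP_iff K F 2).1 this
  have hc_fixed : algebraMap K F c ^ 2 ^ e = algebraMap K F c := by
    rw [← map_pow, ← hK, FiniteField.pow_card]
  have hu : (w / z) ^ 2 ^ e - w / z = algebraMap K F c := by
    rw [CharTwo.sub_eq_add]
    exact div_pow_add_div_eq hz h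
  have hodd : ((2 * k + 1 : ℕ) : F) = 1 :=
    natCast_eq_one_of_odd_of_two_eq_zero (odd_two_mul_add_one k) CharTwo.two_eq_zero
  have hc0 := natCast_mul_eq_zero_of_pow_sub_self hF hc_fixed hu
  rw [hodd, one_mul] at hc0
  exact hc ((map_eq_zero _).1 hc0)

/-- For `q = 2^e`, `c ∈ F_q^*` and any `w ∈ F_{q^{2k+1}}`, the equation
`c·z^{q+1} = wz^q + w^q z` has only the solution `z = 0`. -/
theorem only_zero_solution_scaled (e k : ℕ) (he : 1 ≤ e) (hk : 1 ≤ k)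
    (K F : Type) [Field K] [Field F] [Algebra K F] [Fintype K] [Fintype F]
    (hK : Fintype.card K = 2 ^ e) (hF : Fintype.card F = (2 ^ e) ^ (2 * k + 1))
    (c : K) (hc : c ≠ 0) (w z : F)
    (h : algebraMap K F c * z ^ (2 ^ e + 1) = w * z ^ (2 ^ e) + w ^ (2 ^ e) * z) :
    z = 0 :=
  only_zero_solution_scaled_general e k K F hK hF c hc w z h
end

section
/- Let q = 2^e, k ≥ 1, and let x̄ = (x, x_1), ȳ = (y, y_1) be F_q-linearly independent vectors in V = F_{q^{2k+1}} × F_q. Then the set E = { α^2 (x_1 y + y_1 x)^{q+1} + α (x y^q + x^q y) : α ∈ F_q } is closed under addition and has exactly q elements. -/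
/-!
In characteristic 2 the map `α ↦ α² a + α b` is additive, so `E` is the image of an additive
map on `𝔽_q` and it suffices to show that its kernel is trivial. Put `A = x₁ y + y₁ x` and
`B = x y^q + x^q y`; a nonzero `α` in the kernel satisfies `α A^(q+1) = B`.
If `A = 0` then `B = 0`, so `x / y` is fixed by the `q`-th power map, hence lies in `𝔽_q`, and
`x̄, ȳ` are dependent. If `A ≠ 0`, the identity `x₁ B = x A^q + x^q A` shows that `s = x / A`
satisfies `s^q = s + α x₁` with `α x₁ ∈ 𝔽_q`; iterating, `s = s^(q^(2k+1)) = s + (2k+1) α x₁`,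
so `x₁ = 0`. Likewise `y₁ = 0`, contradicting `A ≠ 0`.
-/

theorem mem_range_algebraMap_of_pow_card_eq {K F : Type*} [Field K] [Fintype K] [Field F]
    [Finite F] [Algebra K F] {z : F} (hz : z ^ Fintype.card K = z) :
    z ∈ Set.range (algebraMap K F) := by
  rw [IsGalois.mem_range_algebraMap_iff_fixed]
  intro f
  obtain ⟨n, rfl⟩ := (FiniteField.bijective_frobeniusAlgEquivOfAlgebraic_pow K F).2 f
  rw [AlgEquiv.coe_pow]
  exact Function.iterate_fixed hz _

theorem pow_pow_pow_eq_add_nsmul {R : Type*} [CommRing R] (p : ℕ) [ExpChar R p] (e : ℕ)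
    {s c : R} (hc : c ^ p ^ e = c) (hs : s ^ p ^ e = s + c) (n : ℕ) :
    s ^ (p ^ e) ^ n = s + n • c := by
  induction n with
  | zero => simp
  | succ n ih =>
    rw [pow_succ, pow_mul, ih, ← iterateFrobenius_def p e, map_add, map_nsmul,
      iterateFrobenius_def, iterateFrobenius_def, hs, hc, succ_nsmul]
    abel

theorem eq_zero_of_pow_eq_add_of_card {F : Type*} [Field F] [Fintype F] (p : ℕ) [Fact p.Prime]
    [CharP F p] {e n : ℕ} (hF : Fintype.card F = (p ^ e) ^ n) (hn : ¬ p ∣ n) {s c : F}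
    (hc : c ^ p ^ e = c) (hs : s ^ p ^ e = s + c) : c = 0 := by
  have h := pow_pow_pow_eq_add_nsmul p e hc hs n
  rw [← hF, FiniteField.pow_card, left_eq_add, nsmul_eq_mul, mul_eq_zero] at h
  exact h.resolve_left (by rwa [CharP.cast_eq_zero_iff F p])

section CharTwo

variable {K F : Type*} [Field K] [Field F] [Algebra K F] [Fintype K] {e : ℕ}

local notation "φ" => algebraMap K F

theorem algebraMap_pow_eq_self (hK : Fintype.card K = 2 ^ e) (c : K) : φ c ^ 2 ^ e = φ c := by
  rw [← map_pow, ← hK, FiniteField.pow_card]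

def sqAddMonoidHom [CharP K 2] (a b : F) : K →+ F where
  toFun α := φ (α ^ 2) * a + φ α * b
  map_zero' := by simp
  map_add' α β := by
    rw [CharTwo.add_sq, map_add, map_add]
    ring

variable [CharP F 2]

theorem algebraMap_mul_frobenius_form (hK : Fintype.card K = 2 ^ e) (x y : F) (x₁ y₁ : K) :
    φ x₁ * (x * y ^ 2 ^ e + x ^ 2 ^ e * y) =
      x * (φ x₁ * y + φ y₁ * x) ^ 2 ^ e + x ^ 2 ^ e * (φ x₁ * y + φ y₁ * x) := by
  have h2 : (2 : F) = 0 := CharP.cast_eq_zero F 2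
  rw [add_pow_char_pow, mul_pow, mul_pow, algebraMap_pow_eq_self hK, algebraMap_pow_eq_self hK]
  linear_combination (-(φ y₁ * x ^ 2 ^ e * x)) * h2

theorem mul_eq_zero_of_mul_pow_succ_eq (hK : Fintype.card K = 2 ^ e) [Fintype F] {n : ℕ}
    (hF : Fintype.card F = (2 ^ e) ^ n) (hn : Odd n) {A B z : F} {z₁ α : K} (hA : A ≠ 0)
    (hz : φ z₁ * B = z * A ^ 2 ^ e + z ^ 2 ^ e * A) (hα : φ α * A ^ (2 ^ e + 1) = B) :
    α * z₁ = 0 := by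
  have h2 : (2 : F) = 0 := CharP.cast_eq_zero F 2
  refine (map_eq_zero φ).mp (eq_zero_of_pow_eq_add_of_card 2 hF (s := z / A)
    hn.not_two_dvd_nat (algebraMap_pow_eq_self hK _) ?_)
  rw [div_pow, map_mul, div_eq_iff (pow_ne_zero _ hA)]
  field_simp
  linear_combination -hz - φ z₁ * hα - z * A ^ 2 ^ e * h2

theorem not_linearIndependent_of_eq_zero (hK : Fintype.card K = 2 ^ e) [Finite F]
    {x y : F} {x₁ y₁ : K} (hA : φ x₁ * y + φ y₁ * x = 0)
    (hB : x * y ^ 2 ^ e + x ^ 2 ^ e * y = 0) :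
    ¬ LinearIndependent K ![(x, x₁), (y, y₁)] := by
  rw [linearIndependent_fin2]
  simp only [Matrix.cons_val_one, Matrix.cons_val_zero]
  rw [CharTwo.add_eq_zero] at hA hB
  rintro ⟨hy, hdep⟩
  by_cases hy0 : y = 0
  · have hy₁ : y₁ ≠ 0 := fun h => hy (by simp [hy0, h])
    refine hdep (x₁ / y₁) (Prod.ext ?_ ?_)
    · simp_all
    · simp [hy₁]
  · obtain ⟨c, hc⟩ := mem_range_algebraMap_of_pow_card_eq (K := K) (z := x / y) (by
      rw [hK, div_pow, div_eq_iff (pow_ne_zero _ hy0)]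
      field_simp
      exact hB.symm)
    refine hdep c (Prod.ext ?_ ?_)
    · rw [Prod.smul_fst, Algebra.smul_def, hc]
      field_simp
    · apply FaithfulSMul.algebraMap_injective K F
      rw [Prod.smul_snd, smul_eq_mul, map_mul, hc]
      field_simp
      linear_combination -hA

theorem eq_zero_of_sq_mul_add_mul_eq_zero (hK : Fintype.card K = 2 ^ e) [Fintype F] {n : ℕ}
    (hF : Fintype.card F = (2 ^ e) ^ n) (hn : Odd n) {x y : F} {x₁ y₁ : K}
    (hind : LinearIndependent K ![(x, x₁), (y, y₁)]) {α : K}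
    (hα : φ (α ^ 2) * (φ x₁ * y + φ y₁ * x) ^ (2 ^ e + 1) +
      φ α * (x * y ^ 2 ^ e + x ^ 2 ^ e * y) = 0) :
    α = 0 := by
  set A := φ x₁ * y + φ y₁ * x
  set B := x * y ^ 2 ^ e + x ^ 2 ^ e * y
  by_contra hα0
  have hAB : φ α * A ^ (2 ^ e + 1) = B := by
    rw [map_pow, sq, mul_assoc, ← mul_add, mul_eq_zero, CharTwo.add_eq_zero] at hα
    exact hα.resolve_left ((map_ne_zero φ).mpr hα0)
  by_cases hA : A = 0
  · exact not_linearIndependent_of_eq_zero hK hA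
      (show B = 0 by rw [← hAB, hA, zero_pow (by positivity), mul_zero]) hind
  have hy_form : φ y₁ * B = y * A ^ 2 ^ e + y ^ 2 ^ e * A := by
    have := algebraMap_mul_frobenius_form hK y x y₁ x₁
    rw [add_comm (φ y₁ * x)] at this
    linear_combination this
  have hx₁ := mul_eq_zero_of_mul_pow_succ_eq hK hF hn hA
    (algebraMap_mul_frobenius_form hK x y x₁ y₁) hAB
  have hy₁ := mul_eq_zero_of_mul_pow_succ_eq hK hF hn hA hy_form hAB
  simp [A, (mul_eq_zero.mp hx₁).resolve_left hα0, (mul_eq_zero.mp hy₁).resolve_left hα0] at hA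

end CharTwo

theorem E_closed_and_card_general (e k : ℕ)
    (K F : Type) [Field K] [Field F] [Algebra K F] [Fintype K] [Fintype F]
    (hK : Fintype.card K = 2 ^ e) (hF : Fintype.card F = (2 ^ e) ^ (2 * k + 1))
    (x y : F) (x₁ y₁ : K)
    (hind : LinearIndependent K ![(x, x₁), (y, y₁)] ) :
    (∀ u ∈ Set.range (fun α : K =>
        algebraMap K F (α ^ 2) * (algebraMap K F x₁ * y + algebraMap K F y₁ * x) ^ (2 ^ e + 1) +
          algebraMap K F α * (x * y ^ (2 ^ e) + x ^ (2 ^ e) * y)),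
      ∀ v ∈ Set.range (fun α : K =>
        algebraMap K F (α ^ 2) * (algebraMap K F x₁ * y + algebraMap K F y₁ * x) ^ (2 ^ e + 1) +
          algebraMap K F α * (x * y ^ (2 ^ e) + x ^ (2 ^ e) * y)),
        u + v ∈ Set.range (fun α : K =>
        algebraMap K F (α ^ 2) * (algebraMap K F x₁ * y + algebraMap K F y₁ * x) ^ (2 ^ e + 1) +
          algebraMap K F α * (x * y ^ (2 ^ e) + x ^ (2 ^ e) * y))) ∧
    (Set.range (fun α : K =>
        algebraMap K F (α ^ 2) * (algebraMap K F x₁ * y + algebraMap K F y₁ * x) ^ (2 ^ e + 1) +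
          algebraMap K F α * (x * y ^ (2 ^ e) + x ^ (2 ^ e) * y))).ncard = 2 ^ e := by
  have : CharP K 2 := charP_of_card_eq_prime_pow hK
  have : CharP F 2 := charP_of_injective_algebraMap (algebraMap K F).injective 2
  let f := sqAddMonoidHom (K := K) ((algebraMap K F x₁ * y + algebraMap K F y₁ * x) ^ (2 ^ e + 1))
    (x * y ^ (2 ^ e) + x ^ (2 ^ e) * y)
  have hf : Function.Injective f := (injective_iff_map_eq_zero f).mpr fun α hα =>
    eq_zero_of_sq_mul_add_mul_eq_zero hK hF (odd_two_mul_add_one k) hind hα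
  refine ⟨?_, ?_⟩
  · rintro _ ⟨α, rfl⟩ _ ⟨β, rfl⟩
    exact ⟨α + β, map_add f α β⟩
  · exact (Set.ncard_range_of_injective hf).trans (by rw [Nat.card_eq_fintype_card, hK])

/-- For linearly independent `x̄ = (x,x₁)`, `ȳ = (y,y₁)` in `V = F_{q^{2k+1}} × F_q`
(`q = 2^e`), the set `E = {α²(x₁y+y₁x)^{q+1} + α(xy^q + x^q y) : α ∈ F_q}` is closed
under addition and has exactly `q` elements. -/
theorem E_closed_and_card (e k : ℕ) (he : 1 ≤ e) (hk : 1 ≤ k)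
    (K F : Type) [Field K] [Field F] [Algebra K F] [Fintype K] [Fintype F]
    (hK : Fintype.card K = 2 ^ e) (hF : Fintype.card F = (2 ^ e) ^ (2 * k + 1))
    (x y : F) (x₁ y₁ : K)
    (hind : LinearIndependent K ![(x, x₁), (y, y₁)] ) :
    (∀ u ∈ Set.range (fun α : K =>
        algebraMap K F (α ^ 2) * (algebraMap K F x₁ * y + algebraMap K F y₁ * x) ^ (2 ^ e + 1) +
          algebraMap K F α * (x * y ^ (2 ^ e) + x ^ (2 ^ e) * y)),
      ∀ v ∈ Set.range (fun α : K =>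
        algebraMap K F (α ^ 2) * (algebraMap K F x₁ * y + algebraMap K F y₁ * x) ^ (2 ^ e + 1) +
          algebraMap K F α * (x * y ^ (2 ^ e) + x ^ (2 ^ e) * y)),
        u + v ∈ Set.range (fun α : K =>
        algebraMap K F (α ^ 2) * (algebraMap K F x₁ * y + algebraMap K F y₁ * x) ^ (2 ^ e + 1) +
          algebraMap K F α * (x * y ^ (2 ^ e) + x ^ (2 ^ e) * y))) ∧
    (Set.range (fun α : K =>
        algebraMap K F (α ^ 2) * (algebraMap K F x₁ * y + algebraMap K F y₁ * x) ^ (2 ^ e + 1) +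
          algebraMap K F α * (x * y ^ (2 ^ e) + x ^ (2 ^ e) * y))).ncard = 2 ^ e :=
  E_closed_and_card_general e k K F hK hF x y x₁ y₁ hind
end

section
/- Let q = 2^e, k ≥ 1, and x ∈ F_{q^{2k+1}}, x ≠ 0. For distinct a, b ∈ F_q, the sets { a^2 x^{q+1} + x y^q + x^q y : y ∈ F_{q^{2k+1}} } and { b^2 x^{q+1} + x y^q + x^q y : y ∈ F_{q^{2k+1}} } are disjoint. -/
/-!
Substituting `y = t x` turns `c x^{q+1} + x y^q + x^q y` into `x^{q+1} (c + t^q + t)`. In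
characteristic 2, `t^q + t = t^q - t` has trace zero over `F_q`, because the Frobenius `t ↦ t^q`
is an `F_q`-automorphism, while an element `c ∈ F_q` has trace `[F : F_q] • c = c` as the degree is
odd. Taking traces of `c + t^q + t = d + s^q + s` therefore gives `c = d`.
-/

open Module

namespace FiniteField

variable {K F : Type*} [Field K] [Fintype K] [Field F] [Finite F] [Algebra K F]

theorem charP_two_of_card_eq_two_pow {e : ℕ} (h : Fintype.card K = 2 ^ e) : CharP K 2 := by
  refine (CharP.charP_iff_prime_eq_zero Nat.prime_two).2 (eq_zero_of_pow_eq_zero (n := e) ?_)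
  exact_mod_cast h ▸ cast_card_eq_zero K

theorem trace_pow_card_sub_self (t : F) : Algebra.trace K F (t ^ Fintype.card K - t) = 0 := by
  have : t ^ Fintype.card K = frobeniusAlgEquivOfAlgebraic K F t := rfl
  rw [map_sub, this, Algebra.trace_eq_of_algEquiv, sub_self]

theorem trace_pow_card_add_self [CharP K 2] (t : F) :
    Algebra.trace K F (t ^ Fintype.card K + t) = 0 := by
  have : CharP F 2 := charP_of_injective_algebraMap' K 2
  rw [← CharTwo.sub_eq_add, trace_pow_card_sub_self]

theorem disjoint_range_algebraMap_mul_add [CharP K 2] (hodd : Odd (finrank K F)) {x : F}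
    (hx : x ≠ 0) {c d : K} (hcd : c ≠ d) :
    Disjoint
      (Set.range fun y : F => algebraMap K F c * x ^ (Fintype.card K + 1) +
        x * y ^ Fintype.card K + x ^ Fintype.card K * y)
      (Set.range fun y : F => algebraMap K F d * x ^ (Fintype.card K + 1) +
        x * y ^ Fintype.card K + x ^ Fintype.card K * y) := by
  set q := Fintype.card K
  have hrange (c : K) : (Set.range fun y : F => algebraMap K F c * x ^ (q + 1) +
      x * y ^ q + x ^ q * y) =
      Set.range fun t : F => x ^ (q + 1) * (algebraMap K F c + (t ^ q + t)) := by
    rw [← (mulRight_bijective₀ x hx).surjective.range_comp]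
    congr 1; ext t; simp only [Function.comp_apply]; ring
  rw [hrange, hrange, Set.disjoint_left]
  rintro _ ⟨s, rfl⟩ ⟨t, hst⟩
  have htrace := congrArg (Algebra.trace K F) (mul_left_cancel₀ (pow_ne_zero _ hx) hst)
  rw [map_add _ (algebraMap K F d), map_add _ (algebraMap K F c), trace_pow_card_add_self,
    trace_pow_card_add_self, add_zero, add_zero, Algebra.trace_algebraMap,
    Algebra.trace_algebraMap] at htrace
  simp only [nsmul_eq_mul, CharTwo.natCast_eq_ite, if_neg (Nat.not_even_iff_odd.2 hodd),
    one_mul] at htrace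
  exact hcd htrace.symm

end FiniteField

theorem images_disjoint_general (e k : ℕ)
    (K F : Type) [Field K] [Field F] [Algebra K F] [Fintype K] [Fintype F]
    (hK : Fintype.card K = 2 ^ e) (hF : Fintype.card F = (2 ^ e) ^ (2 * k + 1))
    (x : F) (hx : x ≠ 0) (a b : K) (hab : a ≠ b) :
    Disjoint
      (Set.range fun y : F =>
        algebraMap K F (a ^ 2) * x ^ (2 ^ e + 1) + x * y ^ (2 ^ e) + x ^ (2 ^ e) * y)
      (Set.range fun y : F =>
        algebraMap K F (b ^ 2) * x ^ (2 ^ e + 1) + x * y ^ (2 ^ e) + x ^ (2 ^ e) * y) := by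
  have : CharP K 2 := FiniteField.charP_two_of_card_eq_two_pow hK
  have hdeg : finrank K F = 2 * k + 1 :=
    Nat.pow_right_injective (Fintype.one_lt_card (α := K)) <|
      (card_eq_pow_finrank (K := K) (V := F)).symm.trans (hK ▸ hF)
  rw [← hK]
  exact FiniteField.disjoint_range_algebraMap_mul_add (hdeg ▸ odd_two_mul_add_one k) hx
    (CharTwo.sq_inj.not.2 hab)

/-- For `q = 2^e`, `x ≠ 0` in `F_{q^{2k+1}}` and distinct `a, b ∈ F_q`, the sets
`{a²x^{q+1} + xy^q + x^q y : y}` and `{b²x^{q+1} + xy^q + x^q y : y}` are disjoint. -/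
theorem images_disjoint (e k : ℕ) (he : 1 ≤ e) (hk : 1 ≤ k)
    (K F : Type) [Field K] [Field F] [Algebra K F] [Fintype K] [Fintype F]
    (hK : Fintype.card K = 2 ^ e) (hF : Fintype.card F = (2 ^ e) ^ (2 * k + 1))
    (x : F) (hx : x ≠ 0) (a b : K) (hab : a ≠ b) :
    Disjoint
      (Set.range fun y : F =>
        algebraMap K F (a ^ 2) * x ^ (2 ^ e + 1) + x * y ^ (2 ^ e) + x ^ (2 ^ e) * y)
      (Set.range fun y : F =>
        algebraMap K F (b ^ 2) * x ^ (2 ^ e + 1) + x * y ^ (2 ^ e) + x ^ (2 ^ e) * y) :=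
  images_disjoint_general e k K F hK hF x hx a b hab
end

section
/- Let q = 2^e, k ≥ 1, and x̄ = (x, x_1) a nonzero vector in V = F_{q^{2k+1}} × F_q. Then the map ȳ ↦ g(x̄, ȳ) = (x_1 y + y_1 x)^{q+1} + x y^q + x^q y from V to F_{q^{2k+1}} is surjective. -/
theorem Nat.coprime_add_one_pow_sub_one {q n : ℕ} (hq : Even q) (hn : Odd n) :
    Nat.Coprime (q + 1) (q ^ n - 1) := by
  have hdvd : q + 1 ∣ q ^ n + 1 := by simpa using hn.nat_add_dvd_pow_add_pow q 1
  refine Nat.Coprime.coprime_dvd_left hdvd ?_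
  rcases Nat.eq_zero_or_pos (q ^ n) with h | h
  · simp [h]
  · rw [show q ^ n + 1 = q ^ n - 1 + 2 by omega, Nat.coprime_self_add_left, Nat.coprime_two_left]
    exact Nat.Even.sub_odd h (hq.pow_of_ne_zero hn.pos.ne') odd_one

theorem AddMonoidHom.surjective_of_card_mul_card_ker_le {G H : Type*} [AddGroup G] [AddGroup H]
    [Finite G] [Finite H] (f : G →+ H) (h : Nat.card H * Nat.card f.ker ≤ Nat.card G) :
    Function.Surjective f := by
  have hG : Nat.card G = Nat.card f.range * Nat.card f.ker := by
    rw [AddSubgroup.card_eq_card_quotient_mul_card_addSubgroup f.ker,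
      Nat.card_congr (QuotientAddGroup.quotientKerEquivRange f).toEquiv]
  rw [← AddMonoidHom.range_eq_top]
  exact AddSubgroup.eq_top_of_le_card _
    (Nat.le_of_mul_le_mul_right (hG ▸ h) (Nat.card_pos (α := f.ker)))

namespace FiniteField

variable {K L : Type*} [Field K] [Fintype K]

theorem pow_surjective_of_coprime {n : ℕ} (hn : n ≠ 0)
    (h : (Fintype.card K - 1).Coprime n) : Function.Surjective fun x : K => x ^ n := by
  classical
  intro y
  rcases eq_or_ne y 0 with rfl | hy
  · exact ⟨0, zero_pow hn⟩
  have hunits : (Nat.card Kˣ).Coprime n := by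
    rwa [Nat.card_eq_fintype_card, Fintype.card_units]
  obtain ⟨x, hx⟩ := (Nat.Coprime.pow_left_bijective hunits).surjective (Units.mk0 y hy)
  exact ⟨x, congrArg Units.val hx⟩

section Algebra

variable [CommRing L] [Algebra K L]

theorem add_pow_card (x y : L) :
    (x + y) ^ Fintype.card K = x ^ Fintype.card K + y ^ Fintype.card K :=
  map_add (frobeniusAlgHom K L) x y

theorem algebraMap_pow_card (c : K) : algebraMap K L c ^ Fintype.card K = algebraMap K L c :=
  (frobeniusAlgHom K L).commutes c

end Algebra

variable [Field L] [Algebra K L]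

open Polynomial in
theorem mem_range_algebraMap_of_pow_card_eq_self {t : L} (ht : t ^ Fintype.card K = t) :
    t ∈ (algebraMap K L).range := by
  have hsplits : (X ^ Fintype.card K - X : K[X]).Splits := by
    rw [splits_iff_card_roots, roots_X_pow_card_sub_X, ← Finset.card_def, Finset.card_univ,
      X_pow_card_sub_X_natDegree_eq K Fintype.one_lt_card]
  have hroot : t ∈ ((X ^ Fintype.card K - X : K[X]).map (algebraMap K L)).roots := by
    rw [mem_roots (Polynomial.map_ne_zero (X_pow_card_sub_X_ne_zero K Fintype.one_lt_card))]
    simp [ht]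
  rw [hsplits.roots_map, roots_X_pow_card_sub_X, Multiset.mem_map] at hroot
  obtain ⟨c, -, hc⟩ := hroot
  exact ⟨c, hc⟩

/-- Iterating Frobenius `n` times gives `t = t + n • c`. -/
theorem eq_zero_of_pow_card_sub_self_eq_algebraMap [Fintype L] {n : ℕ}
    (hL : Fintype.card L = Fintype.card K ^ n) (hn : (n : K) ≠ 0) {t : L} {c : K}
    (h : t ^ Fintype.card K - t = algebraMap K L c) : c = 0 := by
  set φ := frobeniusAlgHom K L
  have hφ : φ t = t + algebraMap K L c := by rw [← h]; simp [φ]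
  have hiterate (m : ℕ) : φ^[m] t = t + m • algebraMap K L c := by
    induction m with
    | zero => simp
    | succ m ih =>
      rw [Function.iterate_succ_apply', ih, map_add, map_nsmul, hφ, AlgHom.commutes, succ_nsmul]
      abel
  have hfix : φ^[n] t = t := by
    rw [coe_frobeniusAlgHom, pow_iterate, ← hL]
    exact FiniteField.pow_card t
  have hnc : algebraMap K L (n * c) = 0 := by
    rw [map_mul, map_natCast, ← nsmul_eq_mul]
    simpa [hfix] using hiterate n
  exact (mul_eq_zero.mp ((map_eq_zero _).mp hnc)).resolve_left hn

end FiniteField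

section CharTwo

variable {K F : Type} [Field K] [Fintype K] [Field F] [Algebra K F] [CharP F 2]

variable (K F) in
@[simps]
def artinSchreierAddSq : F × K →+ F where
  toFun p := p.1 ^ Fintype.card K + p.1 + algebraMap K F p.2 ^ 2
  map_zero' := by simp [zero_pow Fintype.card_ne_zero]
  map_add' p p' := by
    simp only [Prod.fst_add, Prod.snd_add, map_add, FiniteField.add_pow_card, CharTwo.add_sq]
    ring

variable [Fintype F] {n : ℕ}

theorem mem_range_of_artinSchreierAddSq_eq_zero (hn : Odd n)
    (hF : Fintype.card F = Fintype.card K ^ n) {p : F × K} (hp : artinSchreierAddSq K F p = 0) :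
    p ∈ Set.range fun c : K => (algebraMap K F c, (0 : K)) := by
  obtain ⟨t, u⟩ := p
  simp only [artinSchreierAddSq_apply] at hp
  have hnK : (n : K) ≠ 0 := fun h0 => by
    simpa [natCast_eq_one_of_odd_of_two_eq_zero hn CharTwo.two_eq_zero] using
      congrArg (algebraMap K F) h0
  have hu : u = 0 := by
    refine pow_eq_zero_iff two_ne_zero |>.mp <|
      FiniteField.eq_zero_of_pow_card_sub_self_eq_algebraMap hF hnK (t := t) ?_
    rw [CharTwo.sub_eq_add, map_pow]
    linear_combination hp - algebraMap K F u ^ 2 * CharTwo.two_eq_zero (R := F)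
  subst hu
  rw [map_zero, zero_pow two_ne_zero, add_zero] at hp
  have ht : t ^ Fintype.card K = t := by
    linear_combination hp - t * CharTwo.two_eq_zero (R := F)
  obtain ⟨c, rfl⟩ := FiniteField.mem_range_algebraMap_of_pow_card_eq_self ht
  exact ⟨c, rfl⟩

theorem artinSchreierAddSq_surjective (hn : Odd n) (hF : Fintype.card F = Fintype.card K ^ n) :
    Function.Surjective (artinSchreierAddSq K F) := by
  refine AddMonoidHom.surjective_of_card_mul_card_ker_le _ ?_
  have hker : Nat.card (artinSchreierAddSq K F).ker ≤ Nat.card K := by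
    refine Nat.card_le_card_of_surjective (fun c => ⟨(algebraMap K F c, 0), ?_⟩) ?_
    · simp [FiniteField.algebraMap_pow_card, CharTwo.add_self_eq_zero]
    · rintro ⟨p, hp⟩
      obtain ⟨c, rfl⟩ := mem_range_of_artinSchreierAddSq_eq_zero hn hF hp
      exact ⟨c, rfl⟩
  calc Nat.card F * Nat.card (artinSchreierAddSq K F).ker ≤ Nat.card F * Nat.card K :=
        Nat.mul_le_mul_left _ hker
    _ = Nat.card (F × K) := Nat.card_prod F K |>.symm

omit [Fintype F] in
theorem gfun_mul_fst (x t : F) (u : K) :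
    gfun K F (Fintype.card K) (x, 0) (x * t, u) =
      x ^ (Fintype.card K + 1) * artinSchreierAddSq K F (t, u) := by
  simp only [gfun, artinSchreierAddSq_apply, map_zero, zero_mul, zero_add]
  linear_combination (algebraMap K F u * x ^ (Fintype.card K + 1)) *
    FiniteField.algebraMap_pow_card (L := F) u

omit [Fintype F] in
theorem gfun_inv_mul_add (x w : F) {c : K} (hc : c ≠ 0) :
    gfun K F (Fintype.card K) (x, c)
        ((algebraMap K F c)⁻¹ * (w + (algebraMap K F c)⁻¹ * x), 0) =
      w ^ (Fintype.card K + 1) + ((algebraMap K F c)⁻¹ * x) ^ (Fintype.card K + 1) := by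
  set l := (algebraMap K F c)⁻¹
  have hcl : algebraMap K F c * l = 1 := mul_inv_cancel₀ ((map_ne_zero _).mpr hc)
  have hl : l ^ Fintype.card K = l := by rw [inv_pow, FiniteField.algebraMap_pow_card]
  have hfrob : (w + l * x) ^ Fintype.card K = w ^ Fintype.card K + l * x ^ Fintype.card K := by
    rw [FiniteField.add_pow_card, mul_pow, hl]
  simp only [gfun, map_zero, zero_mul, add_zero]
  rw [← mul_assoc, hcl, one_mul, mul_pow l, hl, pow_succ, hfrob]
  linear_combination (l * x * w ^ Fintype.card K + l * x ^ Fintype.card K * w +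
    l ^ 2 * x ^ Fintype.card K * x) * CharTwo.two_eq_zero (R := F) -
    (l * x ^ Fintype.card K * x) * hl

theorem gfun_surjective_of_odd (hn : Odd n) (hF : Fintype.card F = Fintype.card K ^ n)
    {xb : F × K} (hxb : xb ≠ 0) : Function.Surjective (gfun K F (Fintype.card K) xb) := by
  obtain ⟨x, c⟩ := xb
  intro z
  rcases eq_or_ne c 0 with rfl | hc
  · have hx : x ≠ 0 := by
      rintro rfl
      exact hxb rfl
    obtain ⟨⟨t, u⟩, htu⟩ := artinSchreierAddSq_surjective hn hF (z / x ^ (Fintype.card K + 1))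
    exact ⟨(x * t, u), by rw [gfun_mul_fst, htu, mul_div_cancel₀ _ (pow_ne_zero _ hx)]⟩
  · have hq : Even (Fintype.card K) := by
      have h2 : 2 ∣ Fintype.card F :=
        (CharP.cast_eq_zero_iff F 2 _).mp (FiniteField.cast_card_eq_zero F)
      exact (Nat.even_pow.mp (hF ▸ even_iff_two_dvd.mpr h2)).1
    have hcop : (Fintype.card F - 1).Coprime (Fintype.card K + 1) :=
      hF ▸ (Nat.coprime_add_one_pow_sub_one hq hn).symm
    obtain ⟨w, hw⟩ : ∃ w : F, w ^ (Fintype.card K + 1) =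
        z + ((algebraMap K F c)⁻¹ * x) ^ (Fintype.card K + 1) :=
      FiniteField.pow_surjective_of_coprime (Nat.succ_ne_zero _) hcop _
    exact ⟨_, (gfun_inv_mul_add x w hc).trans (by rw [hw, CharTwo.add_cancel_right])⟩

end CharTwo

theorem gfun_surjective_general (e k : ℕ)
    (K F : Type) [Field K] [Field F] [Algebra K F] [Fintype K] [Fintype F]
    (hK : Fintype.card K = 2 ^ e) (hF : Fintype.card F = (2 ^ e) ^ (2 * k + 1))
    (xb : F × K) (hxb : xb ≠ 0) :
    Function.Surjective (fun yb : F × K => gfun K F (2 ^ e) xb yb) := by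
  have : CharP F 2 := charP_of_card_eq_prime_pow (hF.trans (pow_mul 2 e _).symm)
  rw [← hK] at hF ⊢
  exact gfun_surjective_of_odd (odd_two_mul_add_one k) hF hxb

/-- For `q = 2^e` and a nonzero vector `x̄ ∈ V = F_{q^{2k+1}} × F_q`, the map
`ȳ ↦ g(x̄, ȳ)` from `V` to `F_{q^{2k+1}}` is surjective. -/
theorem gfun_surjective (e k : ℕ) (he : 1 ≤ e) (hk : 1 ≤ k)
    (K F : Type) [Field K] [Field F] [Algebra K F] [Fintype K] [Fintype F]
    (hK : Fintype.card K = 2 ^ e) (hF : Fintype.card F = (2 ^ e) ^ (2 * k + 1))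
    (xb : F × K) (hxb : xb ≠ 0) :
    Function.Surjective (fun yb : F × K => gfun K F (2 ^ e) xb yb) :=
  gfun_surjective_general e k K F hK hF xb hxb
end
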